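/- arXiv:2603.07916 — 2 statements merged into one kernel-verified Lean document; each statement's English description precedes it below -/
import Mathlib

section
/- For an L-smooth function f bounded below by f*, SGD with unbiased stochastic gradients of variance at most σ² and constant step size η ≤ 1/L satisfies (1/T)∑_{t=0}^{T−1} E‖∇f(x_t)‖² ≤ 2(f(x_0) − f*)/(ηT) + L η σ². -/
/-!
The descent lemma `f (x + v) ≤ f x + ⟪∇f x, v⟫ + L/2 ‖v‖²`, applied at `v = -η g_t` and integrated,
gives `E f(x_{t+1}) ≤ E f(x_t) - η E⟪∇f(x_t), g_t⟫ + Lη²/2 E‖g_t‖²`. Since `∇f(x_t)` is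
`ℱ_t`-measurable, the pull-out property of conditional expectation and unbiasedness turn
`E⟪∇f(x_t), g_t⟫` into `E‖∇f(x_t)‖²`, and `E‖g_t‖²` into
`E‖∇f(x_t)‖² + E‖g_t - ∇f(x_t)‖² ≤ E‖∇f(x_t)‖² + σ²`. With `Lη ≤ 1` each step therefore decreases
`E f(x_t)` by at least `η/2 E‖∇f(x_t)‖² - Lη²σ²/2`; summing over `t < T` telescopes, and `f ≥ f*`
bounds the last term.
-/

open MeasureTheory ProbabilityTheory
open scoped RealInnerProductSpace

section LipschitzGradient

variable {E : Type*} [NormedAddCommGroup E] [InnerProductSpace ℝ E] [CompleteSpace E]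
  {f : E → ℝ} {L : ℝ}

theorem continuous_gradient_of_norm_sub_le
    (hlip : ∀ x y, ‖gradient f x - gradient f y‖ ≤ L * ‖x - y‖) : Continuous (gradient f) := by
  refine (LipschitzWith.of_dist_le_mul (K := L.toNNReal) fun x y => ?_).continuous
  rw [dist_eq_norm, dist_eq_norm]
  exact (hlip x y).trans (mul_le_mul_of_nonneg_right (Real.le_coe_toNNReal L) (norm_nonneg _))

theorem apply_add_le_of_norm_sub_gradient_le (hf : Differentiable ℝ f)
    (hlip : ∀ x y, ‖gradient f x - gradient f y‖ ≤ L * ‖x - y‖) (x v : E) :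
    f (x + v) ≤ f x + ⟪gradient f x, v⟫ + L / 2 * ‖v‖ ^ 2 := by
  set φ : ℝ → ℝ := fun s => f (x + s • v) - s * ⟪gradient f x, v⟫ - L / 2 * s ^ 2 * ‖v‖ ^ 2
  have hφ : ∀ s, HasDerivAt φ (⟪gradient f (x + s • v) - gradient f x, v⟫ - L * s * ‖v‖ ^ 2) s := by
    intro s
    have hline : HasDerivAt (fun s : ℝ => x + s • v) v s := by
      simpa using ((hasDerivAt_id s).smul_const v).const_add x
    have hfx := (hf (x + s • v)).hasFDerivAt.comp_hasDerivAt s hline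
    rw [← inner_gradient_left] at hfx
    refine ((hfx.sub ((hasDerivAt_id s).mul_const _)).sub
      (((hasDerivAt_pow 2 s).const_mul (L / 2)).mul_const (‖v‖ ^ 2))).congr_deriv ?_
    rw [inner_sub_left]
    push_cast
    ring
  have hφ' : ∀ s ∈ interior (Set.Icc (0 : ℝ) 1),
      ⟪gradient f (x + s • v) - gradient f x, v⟫ - L * s * ‖v‖ ^ 2 ≤ 0 := by
    intro s hs
    rw [interior_Icc] at hs
    have hgrad : ‖gradient f (x + s • v) - gradient f x‖ ≤ L * s * ‖v‖ := by
      simpa [norm_smul, abs_of_pos hs.1, mul_assoc] using hlip (x + s • v) x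
    rw [sub_nonpos]
    calc ⟪gradient f (x + s • v) - gradient f x, v⟫
        ≤ ‖gradient f (x + s • v) - gradient f x‖ * ‖v‖ := real_inner_le_norm _ _
      _ ≤ L * s * ‖v‖ * ‖v‖ := by gcongr
      _ = L * s * ‖v‖ ^ 2 := by ring
  have hanti : AntitoneOn φ (Set.Icc 0 1) :=
    antitoneOn_of_hasDerivWithinAt_nonpos (convex_Icc 0 1)
      (fun s _ => (hφ s).continuousAt.continuousWithinAt) (fun s _ => (hφ s).hasDerivWithinAt) hφ'
  have := hanti (Set.left_mem_Icc.2 zero_le_one) (Set.right_mem_Icc.2 zero_le_one) zero_le_one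
  simp only [φ, one_smul, zero_smul, add_zero, one_mul, zero_mul, one_pow, sub_zero,
    ne_eq, OfNat.ofNat_ne_zero, not_false_eq_true, zero_pow, mul_zero] at this
  linarith

end LipschitzGradient

section Integrability

variable {Ω E : Type*} {m0 : MeasurableSpace Ω} {μ : Measure Ω}
  [NormedAddCommGroup E] [InnerProductSpace ℝ E]

theorem MeasureTheory.MemLp.integrable_inner {X Y : Ω → E} (hX : MemLp X 2 μ)
    (hY : MemLp Y 2 μ) : Integrable (fun ω => ⟪X ω, Y ω⟫) μ :=
  memLp_one_iff_integrable.1 <| (innerSL ℝ).memLp_of_bilin 1 hX hY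

variable [CompleteSpace E] [IsFiniteMeasure μ] {f : E → ℝ} {L : ℝ} {X : Ω → E}

theorem MeasureTheory.MemLp.gradient_comp
    (hlip : ∀ x y, ‖gradient f x - gradient f y‖ ≤ L * ‖x - y‖)
    (hX : MemLp X 2 μ) : MemLp (fun ω => gradient f (X ω)) 2 μ := by
  refine ((memLp_const ‖gradient f 0‖).add (hX.norm.const_mul L)).of_le
    ((continuous_gradient_of_norm_sub_le hlip).comp_aestronglyMeasurable hX.1)
    (ae_of_all _ fun ω => ?_)
  calc ‖gradient f (X ω)‖
        ≤ ‖gradient f 0‖ + ‖gradient f (X ω) - gradient f 0‖ := norm_le_insert' _ _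
    _ ≤ ‖gradient f 0‖ + L * ‖X ω‖ := by simpa using hlip (X ω) 0
    _ ≤ ‖‖gradient f 0‖ + L * ‖X ω‖‖ := Real.le_norm_self _

theorem MeasureTheory.MemLp.integrable_comp_of_bddBelow (hf : Differentiable ℝ f)
    (hlip : ∀ x y, ‖gradient f x - gradient f y‖ ≤ L * ‖x - y‖) {c : ℝ} (hc : ∀ y, c ≤ f y)
    (hX : MemLp X 2 μ) : Integrable (fun ω => f (X ω)) μ := by
  refine integrable_of_le_of_le (hf.continuous.comp_aestronglyMeasurable hX.1)
    (ae_of_all _ fun ω => hc (X ω))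
    (ae_of_all _ fun ω => by
      simpa only [zero_add] using apply_add_le_of_norm_sub_gradient_le hf hlip 0 (X ω))
    (integrable_const c) ?_
  exact ((integrable_const _).add ((hX.integrable one_le_two).const_inner _)).add
    (hX.norm.integrable_sq.const_mul _)

end Integrability

section ConditionalExpectation

variable {Ω E : Type*} {m m0 : MeasurableSpace Ω} {μ : Measure Ω}
  [NormedAddCommGroup E] [InnerProductSpace ℝ E] [CompleteSpace E] {G Y : Ω → E}

theorem integral_inner_eq_integral_norm_sq_of_condExp_eq (hm : m ≤ m0) [SigmaFinite (μ.trim hm)]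
    (hG : StronglyMeasurable[m] G) (hGY : Integrable (fun ω => ⟪G ω, Y ω⟫) μ)
    (hY : Integrable Y μ) (hYG : μ[Y | m] =ᵐ[μ] G) :
    ∫ ω, ⟪G ω, Y ω⟫ ∂μ = ∫ ω, ‖G ω‖ ^ 2 ∂μ :=
  calc ∫ ω, ⟪G ω, Y ω⟫ ∂μ = ∫ ω, (μ[fun ω => ⟪G ω, Y ω⟫ | m]) ω ∂μ := (integral_condExp hm).symm
    _ = ∫ ω, ⟪G ω, (μ[Y | m]) ω⟫ ∂μ :=
      integral_congr_ae (condExp_bilin_of_stronglyMeasurable_left (innerSL ℝ) hG hGY hY)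
    _ = ∫ ω, ‖G ω‖ ^ 2 ∂μ :=
      integral_congr_ae (hYG.mono fun ω h => by simp only [h, real_inner_self_eq_norm_sq])

theorem integral_norm_sq_eq_add_integral_norm_sub_sq_of_condExp_eq [IsFiniteMeasure μ]
    (hm : m ≤ m0) (hG : StronglyMeasurable[m] G) (hG2 : MemLp G 2 μ) (hY2 : MemLp Y 2 μ)
    (hYG : μ[Y | m] =ᵐ[μ] G) :
    ∫ ω, ‖Y ω‖ ^ 2 ∂μ = ∫ ω, ‖G ω‖ ^ 2 ∂μ + ∫ ω, ‖Y ω - G ω‖ ^ 2 ∂μ := by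
  have hGY := hG2.integrable_inner hY2
  have hcross := integral_inner_eq_integral_norm_sq_of_condExp_eq hm hG hGY
    (hY2.integrable one_le_two) hYG
  have hexpand : ∀ ω, ‖Y ω - G ω‖ ^ 2 = ‖Y ω‖ ^ 2 - 2 * ⟪G ω, Y ω⟫ + ‖G ω‖ ^ 2 := fun ω => by
    rw [norm_sub_sq_real, real_inner_comm]
  have hY2int : Integrable (fun ω => ‖Y ω‖ ^ 2) μ := hY2.norm.integrable_sq
  have hGYint : Integrable (fun ω => 2 * ⟪G ω, Y ω⟫) μ := hGY.const_mul 2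
  have hdiff : Integrable (fun ω => ‖Y ω‖ ^ 2 - 2 * ⟪G ω, Y ω⟫) μ := hY2int.sub hGYint
  simp_rw [hexpand]
  rw [integral_add hdiff hG2.norm.integrable_sq, integral_sub hY2int hGYint, integral_const_mul,
    hcross]
  ring

theorem integral_le_of_ae_condExp_le [IsProbabilityMeasure μ] (hm : m ≤ m0) {φ : Ω → ℝ} {c : ℝ}
    (hφ : ∀ᵐ ω ∂μ, (μ[φ | m]) ω ≤ c) : ∫ ω, φ ω ∂μ ≤ c := by
  rw [← integral_condExp hm]
  simpa using integral_mono_ae integrable_condExp (integrable_const c) hφ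

end ConditionalExpectation

section StochasticGradientDescent

variable {Ω E : Type*} {m m0 : MeasurableSpace Ω} {μ : Measure Ω} [IsProbabilityMeasure μ]
  [NormedAddCommGroup E] [InnerProductSpace ℝ E] [CompleteSpace E]
  {f : E → ℝ} {L η σ c : ℝ} {X Y : Ω → E}

theorem integral_apply_sub_smul_le (hm : m ≤ m0) (hf : Differentiable ℝ f)
    (hlip : ∀ x y, ‖gradient f x - gradient f y‖ ≤ L * ‖x - y‖) (hc : ∀ y, c ≤ f y)
    (hL : 0 ≤ L) (hη : 0 ≤ η) (hLη : L * η ≤ 1)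
    (hX : StronglyMeasurable[m] X) (hX2 : MemLp X 2 μ) (hY2 : MemLp Y 2 μ)
    (hunbiased : μ[Y | m] =ᵐ[μ] fun ω => gradient f (X ω))
    (hvar : ∀ᵐ ω ∂μ, (μ[fun ω => ‖Y ω - gradient f (X ω)‖ ^ 2 | m]) ω ≤ σ ^ 2) :
    ∫ ω, f (X ω - η • Y ω) ∂μ
      ≤ ∫ ω, f (X ω) ∂μ - η / 2 * ∫ ω, ‖gradient f (X ω)‖ ^ 2 ∂μ + L * η ^ 2 / 2 * σ ^ 2 := by
  have hG : StronglyMeasurable[m] fun ω => gradient f (X ω) :=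
    (continuous_gradient_of_norm_sub_le hlip).comp_stronglyMeasurable hX
  have hG2 := hX2.gradient_comp hlip
  have hGY := hG2.integrable_inner hY2
  have hdescent : ∀ ω, f (X ω - η • Y ω)
      ≤ f (X ω) - η * ⟪gradient f (X ω), Y ω⟫ + L * η ^ 2 / 2 * ‖Y ω‖ ^ 2 := fun ω => by
    have := apply_add_le_of_norm_sub_gradient_le hf hlip (X ω) (-(η • Y ω))
    rw [← sub_eq_add_neg, inner_neg_right, real_inner_smul_right, norm_neg, norm_smul, mul_pow,
      Real.norm_eq_abs, sq_abs] at this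
    linarith
  have hmean : ∫ ω, f (X ω - η • Y ω) ∂μ ≤ ∫ ω, f (X ω) ∂μ
      - η * ∫ ω, ⟪gradient f (X ω), Y ω⟫ ∂μ + L * η ^ 2 / 2 * ∫ ω, ‖Y ω‖ ^ 2 ∂μ := by
    have hfX := hX2.integrable_comp_of_bddBelow hf hlip hc
    have hinner : Integrable (fun ω => η * ⟪gradient f (X ω), Y ω⟫) μ := hGY.const_mul η
    have hnorm : Integrable (fun ω => L * η ^ 2 / 2 * ‖Y ω‖ ^ 2) μ :=
      hY2.norm.integrable_sq.const_mul _
    have hdiff : Integrable (fun ω => f (X ω) - η * ⟪gradient f (X ω), Y ω⟫) μ := hfX.sub hinner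
    rw [← integral_const_mul, ← integral_const_mul, ← integral_sub hfX hinner,
      ← integral_add hdiff hnorm]
    exact integral_mono ((hX2.sub (hY2.const_smul η)).integrable_comp_of_bddBelow hf hlip hc)
      (hdiff.add hnorm) hdescent
  have hcross := integral_inner_eq_integral_norm_sq_of_condExp_eq hm hG hGY
    (hY2.integrable one_le_two) hunbiased
  have hsplit := integral_norm_sq_eq_add_integral_norm_sub_sq_of_condExp_eq hm hG hG2 hY2 hunbiased
  have hnoise := integral_le_of_ae_condExp_le hm hvar
  have hgrad_nonneg : 0 ≤ ∫ ω, ‖gradient f (X ω)‖ ^ 2 ∂μ := integral_nonneg fun ω => sq_nonneg _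
  rw [hcross, hsplit] at hmean
  -- `Lη ≤ 1` lets half of the decrease `η E‖∇f(X)‖²` absorb the `Lη²/2 E‖∇f(X)‖²` from `E‖Y‖²`.
  nlinarith [mul_le_mul_of_nonneg_left hnoise (by positivity : 0 ≤ L * η ^ 2 / 2),
    mul_nonneg (mul_nonneg hη (sub_nonneg.2 hLη)) hgrad_nonneg]

end StochasticGradientDescent

theorem sum_range_le_of_le_sub_add {a b : ℕ → ℝ} {e c : ℝ} (hstep : ∀ t, a (t + 1) ≤ a t - b t + e)
    {T : ℕ} (hc : c ≤ a T) : ∑ t ∈ Finset.range T, b t ≤ a 0 - c + T * e :=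
  calc ∑ t ∈ Finset.range T, b t ≤ ∑ t ∈ Finset.range T, (a t - a (t + 1) + e) :=
        Finset.sum_le_sum fun t _ => by linarith [hstep t]
    _ = a 0 - a T + T * e := by
        rw [Finset.sum_add_distrib, Finset.sum_range_sub', Finset.sum_const, Finset.card_range,
          nsmul_eq_mul]
    _ ≤ a 0 - c + T * e := by linarith

theorem stmt_4_general {Ω : Type*} [m0 : MeasurableSpace Ω] (μ : Measure Ω)
    [IsProbabilityMeasure μ]
    (d : ℕ) (L η σ fstar : ℝ) (hL : 0 < L) (hη : 0 < η) (hηL : η ≤ 1 / L)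
    (T : ℕ)
    (f : EuclideanSpace ℝ (Fin d) → ℝ) (hf : Differentiable ℝ f)
    (hlip : ∀ x y, ‖gradient f x - gradient f y‖ ≤ L * ‖x - y‖)
    (hlb : ∀ y, fstar ≤ f y)
    (ℱ : ℕ → MeasurableSpace Ω) (hℱ : ∀ t, ℱ t ≤ m0)
    (x g : ℕ → Ω → EuclideanSpace ℝ (Fin d))
    (x0 : EuclideanSpace ℝ (Fin d)) (hx0 : ∀ ω, x 0 ω = x0)
    (hupdate : ∀ t ω, x (t + 1) ω = x t ω - η • g t ω)
    (hadapted : ∀ t, Measurable[ℱ t] (x t))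
    (hL2 : ∀ t, MemLp (g t) 2 μ)
    (hunbiased : ∀ t, μ[g t | ℱ t] =ᵐ[μ] fun ω => gradient f (x t ω))
    (hvar : ∀ t, ∀ᵐ ω ∂μ,
      (μ[fun ω' => ‖g t ω' - gradient f (x t ω')‖ ^ 2 | ℱ t]) ω ≤ σ ^ 2) :
    (T : ℝ)⁻¹ * ∑ t ∈ Finset.range T, ∫ ω, ‖gradient f (x t ω)‖ ^ 2 ∂μ
      ≤ 2 * (f x0 - fstar) / (η * T) + L * η * σ ^ 2 := by
  have hLη : L * η ≤ 1 := by rwa [le_div_iff₀ hL, mul_comm] at hηL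
  have hx2 : ∀ t, MemLp (x t) 2 μ := by
    intro t
    induction t with
    | zero =>
      rw [show x 0 = fun _ => x0 from funext hx0]
      exact memLp_const x0
    | succ t ih =>
      rw [show x (t + 1) = fun ω => x t ω - η • g t ω from funext (hupdate t)]
      exact ih.sub ((hL2 t).const_smul η)
  have hstep : ∀ t, ∫ ω, f (x (t + 1) ω) ∂μ ≤ ∫ ω, f (x t ω) ∂μ
      - η / 2 * ∫ ω, ‖gradient f (x t ω)‖ ^ 2 ∂μ + L * η ^ 2 / 2 * σ ^ 2 := fun t => by
    simpa only [hupdate] using integral_apply_sub_smul_le (hℱ t) hf hlip hlb hL.le hη.le hLη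
      (hadapted t).stronglyMeasurable (hx2 t) (hL2 t) (hunbiased t) (hvar t)
  have hlow : fstar ≤ ∫ ω, f (x T ω) ∂μ := by
    simpa using integral_mono (integrable_const fstar)
      ((hx2 T).integrable_comp_of_bddBelow hf hlip hlb) fun ω => hlb _
  have hsum := sum_range_le_of_le_sub_add (a := fun t => ∫ ω, f (x t ω) ∂μ) hstep hlow
  simp only [hx0, integral_const, probReal_univ, one_smul, ← Finset.mul_sum] at hsum
  calc (T : ℝ)⁻¹ * ∑ t ∈ Finset.range T, ∫ ω, ‖gradient f (x t ω)‖ ^ 2 ∂μ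
      ≤ (T : ℝ)⁻¹ * (2 * (f x0 - fstar) / η + T * (L * η * σ ^ 2)) := by
        gcongr
        rw [div_add' _ _ _ hη.ne', le_div_iff₀ hη]
        linarith
    _ = 2 * (f x0 - fstar) / (η * T) + ((T : ℝ)⁻¹ * T) * (L * η * σ ^ 2) := by ring
    _ ≤ 2 * (f x0 - fstar) / (η * T) + L * η * σ ^ 2 :=
        (add_le_add_iff_left _).2 (mul_le_of_le_one_left (by positivity) inv_mul_le_one)

/-- SGD on an L-smooth function bounded below: with unbiased stochastic
gradients of conditional variance ≤ σ² and step size η ≤ 1/L,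
(1/T)∑ E‖∇f(x_t)‖² ≤ 2(f(x₀) − f*)/(ηT) + Lησ². -/
theorem stmt_4 {Ω : Type*} [m0 : MeasurableSpace Ω] (μ : Measure Ω)
    [IsProbabilityMeasure μ]
    (d : ℕ) (L η σ fstar : ℝ) (hL : 0 < L) (hη : 0 < η) (hηL : η ≤ 1 / L)
    (hσ : 0 ≤ σ) (T : ℕ) (hT : 0 < T)
    (f : EuclideanSpace ℝ (Fin d) → ℝ) (hf : Differentiable ℝ f)
    (hlip : ∀ x y, ‖gradient f x - gradient f y‖ ≤ L * ‖x - y‖)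
    (hlb : ∀ y, fstar ≤ f y)
    (ℱ : ℕ → MeasurableSpace Ω) (hℱ : ∀ t, ℱ t ≤ m0)
    (hmono : ∀ s t, s ≤ t → ℱ s ≤ ℱ t)
    (x g : ℕ → Ω → EuclideanSpace ℝ (Fin d))
    (x0 : EuclideanSpace ℝ (Fin d)) (hx0 : ∀ ω, x 0 ω = x0)
    (hupdate : ∀ t ω, x (t + 1) ω = x t ω - η • g t ω)
    (hadapted : ∀ t, Measurable[ℱ t] (x t))
    (hmeas : ∀ t, Measurable[ℱ (t + 1)] (g t))
    (hL2 : ∀ t, MemLp (g t) 2 μ)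
    (hunbiased : ∀ t, μ[g t | ℱ t] =ᵐ[μ] fun ω => gradient f (x t ω))
    (hvar : ∀ t, ∀ᵐ ω ∂μ,
      (μ[fun ω' => ‖g t ω' - gradient f (x t ω')‖ ^ 2 | ℱ t]) ω ≤ σ ^ 2) :
    (T : ℝ)⁻¹ * ∑ t ∈ Finset.range T, ∫ ω, ‖gradient f (x t ω)‖ ^ 2 ∂μ
      ≤ 2 * (f x0 - fstar) / (η * T) + L * η * σ ^ 2 :=
  stmt_4_general (m0 := m0) μ d L η σ fstar hL hη hηL T f hf hlip hlb ℱ hℱ x g x0 hx0 hupdate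
    hadapted hL2 hunbiased hvar
end

section
/- If f is convex and L-smooth, then the gradient is cocoercive: ⟨∇f(x) − ∇f(y), x − y⟩ ≥ (1/L)‖∇f(x) − ∇f(y)‖² for all x, y. -/
/-!
Convexity gives the first-order lower bound `f x + ⟪∇f x, y - x⟫ ≤ f y`, and the Lipschitz gradient
gives the quadratic upper bound (descent lemma). Applying the lower bound at the gradient step
`z = y - L⁻¹ (∇f y - ∇f x)` and the upper bound between `y` and `z` sharpens the lower bound by
`‖∇f y - ∇f x‖² / (2L)`; adding the sharpened bound for `(x, y)` and `(y, x)` gives cocoercivity.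
-/

open RealInnerProductSpace

section

variable {E : Type*} [NormedAddCommGroup E] [InnerProductSpace ℝ E] [CompleteSpace E]
  {f : E → ℝ}

theorem hasDerivAt_comp_add_smul {x v : E} {t : ℝ} (hf : DifferentiableAt ℝ f (x + t • v)) :
    HasDerivAt (fun s : ℝ => f (x + s • v)) ⟪gradient f (x + t • v), v⟫ t := by
  have hline : HasDerivAt (fun s : ℝ => x + s • v) v t := by
    simpa using ((hasDerivAt_id t).smul_const v).const_add x
  simpa [Function.comp_def, real_inner_comm] using
    hf.hasGradientAt.hasFDerivAt.comp_hasDerivAt t hline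

theorem ConvexOn.add_inner_gradient_le (hconv : ConvexOn ℝ Set.univ f) {x : E}
    (hf : DifferentiableAt ℝ f x) (y : E) :
    f x + ⟪gradient f x, y - x⟫ ≤ f y := by
  have hline : ConvexOn ℝ Set.univ (fun t : ℝ => f (x + t • (y - x))) := by
    simpa [Function.comp_def, AffineMap.lineMap_apply, add_comm] using
      hconv.comp_affineMap (AffineMap.lineMap x y)
  have hderiv := hasDerivAt_comp_add_smul (v := y - x) (t := 0) (by simpa using hf)
  have := hline.le_slope_of_hasDerivAt (Set.mem_univ 0) (Set.mem_univ 1) one_pos hderiv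
  simp only [slope_def_field, zero_smul, add_zero, one_smul, add_sub_cancel, sub_zero, div_one]
    at this
  linarith

theorem le_add_inner_gradient_add_sq_norm {L : ℝ} (hf : Differentiable ℝ f)
    (hlip : ∀ x y, ‖gradient f x - gradient f y‖ ≤ L * ‖x - y‖) (x y : E) :
    f y ≤ f x + ⟪gradient f x, y - x⟫ + L / 2 * ‖y - x‖ ^ 2 := by
  set v := y - x
  have hderiv (t : ℝ) := hasDerivAt_comp_add_smul (x := x) (v := v) (hf (x + t • v))
  have hbound : ∀ t ≥ 0, ⟪gradient f (x + t • v), v⟫ ≤ ⟪gradient f x, v⟫ + L * ‖v‖ ^ 2 * t := by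
    intro t ht
    have hstep : ‖gradient f (x + t • v) - gradient f x‖ ≤ L * (t * ‖v‖) := by
      simpa [norm_smul, abs_of_nonneg ht] using hlip (x + t • v) x
    have := real_inner_le_norm (gradient f (x + t • v) - gradient f x) v
    rw [inner_sub_left] at this
    nlinarith [norm_nonneg v]
  have hB (t : ℝ) : HasDerivAt (fun s : ℝ => f x + s * ⟪gradient f x, v⟫ + L / 2 * ‖v‖ ^ 2 * s ^ 2)
      (⟪gradient f x, v⟫ + L * ‖v‖ ^ 2 * t) t := by
    have h := (((hasDerivAt_id t).mul_const ⟪gradient f x, v⟫).const_add (f x)).add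
      ((hasDerivAt_pow 2 t).const_mul (L / 2 * ‖v‖ ^ 2))
    exact h.congr_deriv (by simp; ring)
  have := image_le_of_deriv_right_le_deriv_boundary (a := 0) (b := 1)
    (fun t _ => (hderiv t).continuousAt.continuousWithinAt)
    (fun t _ => (hderiv t).hasDerivWithinAt) (by simp)
    (fun t _ => (hB t).continuousAt.continuousWithinAt)
    (fun t _ => (hB t).hasDerivWithinAt) (fun t ht => hbound t ht.1)
    (Set.right_mem_Icc.2 zero_le_one)
  simpa [v] using this

theorem ConvexOn.add_inner_gradient_add_sq_norm_le {L : ℝ} (hL : 0 < L)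
    (hconv : ConvexOn ℝ Set.univ f) (hf : Differentiable ℝ f)
    (hlip : ∀ x y, ‖gradient f x - gradient f y‖ ≤ L * ‖x - y‖) (x y : E) :
    f x + ⟪gradient f x, y - x⟫ + 1 / (2 * L) * ‖gradient f y - gradient f x‖ ^ 2 ≤ f y := by
  set g := gradient f y - gradient f x
  set z := y - L⁻¹ • g
  have hbelow := hconv.add_inner_gradient_le (hf x) z
  have habove := le_add_inner_gradient_add_sq_norm hf hlip y z
  have hzx : z - x = (y - x) - L⁻¹ • g := by simp only [z]; abel
  have hzy : z - y = -(L⁻¹ • g) := by simp only [z]; abel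
  have hgg : L⁻¹ * ⟪gradient f y, g⟫ - L⁻¹ * ⟪gradient f x, g⟫ = L⁻¹ * ‖g‖ ^ 2 := by
    rw [← mul_sub, ← inner_sub_left, real_inner_self_eq_norm_sq]
  rw [hzx, inner_sub_right, real_inner_smul_right] at hbelow
  rw [hzy, inner_neg_right, real_inner_smul_right, norm_neg, norm_smul, Real.norm_eq_abs,
    abs_of_pos (inv_pos.2 hL)] at habove
  have hcoef : L / 2 * (L⁻¹ * ‖g‖) ^ 2 = L⁻¹ * ‖g‖ ^ 2 - 1 / (2 * L) * ‖g‖ ^ 2 := by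
    field_simp; ring
  linarith

theorem ConvexOn.inner_gradient_sub_gradient_ge {L : ℝ} (hL : 0 < L)
    (hconv : ConvexOn ℝ Set.univ f) (hf : Differentiable ℝ f)
    (hlip : ∀ x y, ‖gradient f x - gradient f y‖ ≤ L * ‖x - y‖) (x y : E) :
    ⟪gradient f x - gradient f y, x - y⟫ ≥ 1 / L * ‖gradient f x - gradient f y‖ ^ 2 := by
  have hxy := hconv.add_inner_gradient_add_sq_norm_le hL hf hlip x y
  have hyx := hconv.add_inner_gradient_add_sq_norm_le hL hf hlip y x
  rw [norm_sub_rev] at hxy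
  have hsplit : ⟪gradient f x - gradient f y, x - y⟫
      = -⟪gradient f x, y - x⟫ - ⟪gradient f y, x - y⟫ := by
    rw [inner_sub_left, ← inner_neg_right, neg_sub]
  have hcoef : 1 / L = 1 / (2 * L) + 1 / (2 * L) := by ring
  rw [hsplit, hcoef]
  linarith

end

/-- Cocoercivity of the gradient of a convex L-smooth function. -/
theorem stmt_12 (d : ℕ) (L : ℝ) (hL : 0 < L)
    (f : EuclideanSpace ℝ (Fin d) → ℝ) (hf : Differentiable ℝ f)
    (hconv : ConvexOn ℝ Set.univ f)
    (hlip : ∀ x y, ‖gradient f x - gradient f y‖ ≤ L * ‖x - y‖) :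
    ∀ x y, ⟪gradient f x - gradient f y, x - y⟫ ≥
      (1 / L) * ‖gradient f x - gradient f y‖ ^ 2 :=
  hconv.inner_gradient_sub_gradient_ge hL hf hlip
end
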